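/- arXiv:1106.4541 — 2 statements merged into one kernel-verified Lean document; each statement's English description precedes it below -/
import Mathlib

section
/- Let u be a positive C² function on a domain Ω ⊂ ℝⁿ. The graph of u is locally strictly convex as a hypersurface in ℍ^{n+1} (i.e., all hyperbolic principal curvatures computed with respect to the upward normal are positive) if and only if the matrix {δᵢⱼ + uᵢuⱼ + u u_{ij}} is positive definite at every point of Ω; equivalently, the function (u² + |x|²)/2 is strictly convex. -/
open Matrix

/-!
Write `Q = Du ⊗ Du` and `w = √(1 + |Du|²)`, so that `Q² = (w² - 1) Q`. The matrix
`Γ = I + Q / (1 + w)` is the symmetric square root of `I + Q` and is inverse to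
`γ = I - Q / (w (1 + w))`. Hence `Γ (w A[u]) Γ = Γ² + u (Γ γ) D²u (γ Γ) = I + Q + u D²u`,
so `w A[u]` and `I + Q + u D²u` are congruent, and congruence by an invertible matrix
preserves positivity of a quadratic form.
-/

section QuadForm

variable {n : Type*} [Fintype n]

/-- Unlike `Matrix.PosDef`, this asks for no symmetry of `B`. -/
def PosQuadForm (B : Matrix n n ℝ) : Prop :=
  ∀ ξ : n → ℝ, ξ ≠ 0 → 0 < ξ ⬝ᵥ (B *ᵥ ξ)

theorem posQuadForm_smul_iff {c : ℝ} (hc : 0 < c) (B : Matrix n n ℝ) :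
    PosQuadForm (c • B) ↔ PosQuadForm B := by
  refine forall₂_congr fun ξ _ => ?_
  rw [smul_mulVec, dotProduct_smul, smul_eq_mul, mul_pos_iff_of_pos_left hc]

theorem posQuadForm_transpose_mul_mul_iff [DecidableEq n] {Γ : Matrix n n ℝ} (hΓ : IsUnit Γ)
    (B : Matrix n n ℝ) : PosQuadForm (Γᵀ * B * Γ) ↔ PosQuadForm B := by
  have hquad : ∀ ξ, ξ ⬝ᵥ ((Γᵀ * B * Γ) *ᵥ ξ) = (Γ *ᵥ ξ) ⬝ᵥ (B *ᵥ (Γ *ᵥ ξ)) := fun ξ => by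
    rw [← mulVec_mulVec, ← mulVec_mulVec, dotProduct_mulVec, vecMul_transpose]
  have hinj := mulVec_injective_iff_isUnit.mpr hΓ
  unfold PosQuadForm
  conv_rhs => rw [(mulVec_surjective_iff_isUnit.mpr hΓ).forall]
  refine forall_congr' fun ξ => ?_
  rw [hquad, Ne, Ne, ← hinj.eq_iff, mulVec_zero]

end QuadForm

theorem one_add_smul_mul_one_add_smul {𝕜 R : Type*} [CommRing 𝕜] [Ring R] [Algebra 𝕜 R]
    {Q : R} {s : 𝕜} (hQ : Q * Q = s • Q) (a b : 𝕜) :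
    (1 + a • Q) * (1 + b • Q) = 1 + (a + b + a * b * s) • Q := by
  simp only [mul_add, add_mul, one_mul, mul_one, smul_mul_smul_comm, hQ, smul_smul]
  module

section RankOne

variable {n : Type*} [Fintype n]

theorem vecMulVec_self_mul_self (P : n → ℝ) :
    vecMulVec P P * vecMulVec P P = (P ⬝ᵥ P) • vecMulVec P P := by
  rw [vecMulVec_mul_vecMulVec, vecMulVec_smul]

variable [DecidableEq n] {P : n → ℝ} {W : ℝ} (hW0 : 0 < W) (hW : W ^ 2 = 1 + P ⬝ᵥ P)
include hW0 hW

theorem one_sub_smul_vecMulVec_mul_one_add_smul :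
    (1 - (1 / (W * (1 + W))) • vecMulVec P P) * (1 + (1 / (1 + W)) • vecMulVec P P) = 1 := by
  rw [sub_eq_add_neg, ← neg_smul, one_add_smul_mul_one_add_smul (vecMulVec_self_mul_self P),
    show -(1 / (W * (1 + W))) + 1 / (1 + W) + -(1 / (W * (1 + W))) * (1 / (1 + W)) * (P ⬝ᵥ P)
      = 0 by field_simp; linear_combination hW, zero_smul, add_zero]

theorem one_add_smul_vecMulVec_mul_one_sub_smul :
    (1 + (1 / (1 + W)) • vecMulVec P P) * (1 - (1 / (W * (1 + W))) • vecMulVec P P) = 1 := by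
  rw [sub_eq_add_neg, ← neg_smul, one_add_smul_mul_one_add_smul (vecMulVec_self_mul_self P),
    show 1 / (1 + W) + -(1 / (W * (1 + W))) + 1 / (1 + W) * -(1 / (W * (1 + W))) * (P ⬝ᵥ P)
      = 0 by field_simp; linear_combination hW, zero_smul, add_zero]

theorem one_add_smul_vecMulVec_mul_self :
    (1 + (1 / (1 + W)) • vecMulVec P P) * (1 + (1 / (1 + W)) • vecMulVec P P)
      = 1 + vecMulVec P P := by
  rw [one_add_smul_mul_one_add_smul (vecMulVec_self_mul_self P),
    show 1 / (1 + W) + 1 / (1 + W) + 1 / (1 + W) * (1 / (1 + W)) * (P ⬝ᵥ P) = 1 by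
      field_simp; linear_combination (-1) * hW, one_smul]

theorem posQuadForm_curvature_iff (u : ℝ) (H : Matrix n n ℝ) :
    PosQuadForm ((1 / W) • (1 + u • ((1 - (1 / (W * (1 + W))) • vecMulVec P P) * H *
        (1 - (1 / (W * (1 + W))) • vecMulVec P P)))) ↔
      PosQuadForm (1 + vecMulVec P P + u • H) := by
  set γ := 1 - (1 / (W * (1 + W))) • vecMulVec P P
  set Γ := 1 + (1 / (1 + W)) • vecMulVec P P with hΓ
  have hγΓ : γ * Γ = 1 := one_sub_smul_vecMulVec_mul_one_add_smul hW0 hW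
  have hΓγ : Γ * γ = 1 := one_add_smul_vecMulVec_mul_one_sub_smul hW0 hW
  have hΓsymm : Γᵀ = Γ := by
    rw [hΓ, transpose_add, transpose_one, transpose_smul, transpose_vecMulVec]
  have hΓΓ : Γ * Γ = 1 + vecMulVec P P := one_add_smul_vecMulVec_mul_self hW0 hW
  clear_value γ Γ
  have hcongr : 1 + vecMulVec P P + u • H = Γᵀ * (1 + u • (γ * H * γ)) * Γ := by
    simp only [hΓsymm, mul_add, add_mul, mul_one, Matrix.mul_smul, Matrix.smul_mul,
      Matrix.mul_assoc, hγΓ]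
    rw [← Matrix.mul_assoc, hΓγ, one_mul, hΓΓ]
  rw [posQuadForm_smul_iff (by positivity), hcongr,
    posQuadForm_transpose_mul_mul_iff ⟨⟨Γ, γ, hΓγ, hγΓ⟩, rfl⟩]

end RankOne

theorem stmt9_general (n : ℕ) (Ω : Set (Fin n → ℝ))
    (u : (Fin n → ℝ) → ℝ)
    (p : (Fin n → ℝ) → Fin n → ℝ)
    (Hess : (Fin n → ℝ) → Matrix (Fin n) (Fin n) ℝ)
    (w : (Fin n → ℝ) → ℝ) (hw : ∀ x, w x = Real.sqrt (1 + ∑ i, (p x i) ^ 2))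
    (γ : (Fin n → ℝ) → Matrix (Fin n) (Fin n) ℝ)
    (hγ : ∀ x i j, γ x i j =
      (if i = j then (1 : ℝ) else 0) - p x i * p x j / (w x * (1 + w x)))
    (A M : (Fin n → ℝ) → Matrix (Fin n) (Fin n) ℝ)
    (hA : ∀ x i j, A x i j = (1 / w x) * ((if i = j then (1 : ℝ) else 0) +
      u x * (γ x * Hess x * γ x) i j))
    (hM : ∀ x i j, M x i j =
      (if i = j then (1 : ℝ) else 0) + p x i * p x j + u x * Hess x i j) :
    (∀ x ∈ Ω, ∀ ξ : Fin n → ℝ, ξ ≠ 0 → 0 < ξ ⬝ᵥ (A x *ᵥ ξ)) ↔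
      (∀ x ∈ Ω, ∀ ξ : Fin n → ℝ, ξ ≠ 0 → 0 < ξ ⬝ᵥ (M x *ᵥ ξ)) := by
  refine forall₂_congr fun x _ => ?_
  have hW0 : 0 < w x := by rw [hw]; positivity
  have hW : w x ^ 2 = 1 + p x ⬝ᵥ p x := by
    rw [hw, Real.sq_sqrt (by positivity)]
    simp only [dotProduct, sq]
  have hγx : γ x = 1 - (1 / (w x * (1 + w x))) • vecMulVec (p x) (p x) := by
    ext i j
    rw [hγ, Matrix.sub_apply, Matrix.one_apply, Matrix.smul_apply, vecMulVec_apply, smul_eq_mul]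
    ring
  have hAx : A x = (1 / w x) • (1 + u x • (γ x * Hess x * γ x)) := by
    ext i j
    rw [hA, Matrix.smul_apply, Matrix.add_apply, Matrix.one_apply, Matrix.smul_apply, smul_eq_mul, smul_eq_mul]
  have hMx : M x = 1 + vecMulVec (p x) (p x) + u x • Hess x := by
    ext i j
    rw [hM, Matrix.add_apply, Matrix.add_apply, Matrix.one_apply, vecMulVec_apply, Matrix.smul_apply, smul_eq_mul]
  have hcurv := posQuadForm_curvature_iff hW0 hW (u x) (Hess x)
  rwa [← hγx, ← hAx, ← hMx] at hcurv

/-- The graph of a positive `C²` function `u` is locally strictly convex in `ℍ^{n+1}`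
(all hyperbolic principal curvatures positive, i.e. the curvature matrix
`A[u] = (1/w)(δᵢⱼ + u γⁱᵏu_{kl}γˡʲ)` is positive definite at every point) if and only
if the matrix `δᵢⱼ + uᵢuⱼ + u u_{ij}` is positive definite at every point. -/
theorem stmt9 (n : ℕ) (Ω : Set (Fin n → ℝ)) (hΩ : IsOpen Ω)
    (u : (Fin n → ℝ) → ℝ) (hu : ContDiffOn ℝ 2 u Ω) (hupos : ∀ x ∈ Ω, 0 < u x)
    (p : (Fin n → ℝ) → Fin n → ℝ)
    (hp : ∀ x i, p x i = fderiv ℝ u x (Pi.single i 1))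
    (Hess : (Fin n → ℝ) → Matrix (Fin n) (Fin n) ℝ)
    (hHess : ∀ x i j, Hess x i j =
      fderiv ℝ (fun y => fderiv ℝ u y (Pi.single j 1)) x (Pi.single i 1))
    (w : (Fin n → ℝ) → ℝ) (hw : ∀ x, w x = Real.sqrt (1 + ∑ i, (p x i) ^ 2))
    (γ : (Fin n → ℝ) → Matrix (Fin n) (Fin n) ℝ)
    (hγ : ∀ x i j, γ x i j =
      (if i = j then (1 : ℝ) else 0) - p x i * p x j / (w x * (1 + w x)))
    (A M : (Fin n → ℝ) → Matrix (Fin n) (Fin n) ℝ)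
    (hA : ∀ x i j, A x i j = (1 / w x) * ((if i = j then (1 : ℝ) else 0) +
      u x * (γ x * Hess x * γ x) i j))
    (hM : ∀ x i j, M x i j =
      (if i = j then (1 : ℝ) else 0) + p x i * p x j + u x * Hess x i j) :
    (∀ x ∈ Ω, ∀ ξ : Fin n → ℝ, ξ ≠ 0 → 0 < ξ ⬝ᵥ (A x *ᵥ ξ)) ↔
      (∀ x ∈ Ω, ∀ ξ : Fin n → ℝ, ξ ≠ 0 → 0 < ξ ⬝ᵥ (M x *ᵥ ξ)) :=
  stmt9_general n Ω u p Hess w hw γ hγ A M hA hM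
end

section
/- Let u be a smooth positive function on a domain Ω ⊂ ℝⁿ whose graph is strictly locally convex in hyperbolic space, i.e., the matrix δᵢⱼ + uᵢuⱼ + u uᵢⱼ is positive definite. If the function h = u√(1+|Du|²) attains an interior local maximum at x₀ ∈ Ω, then Du(x₀) = 0. -/
open Finset Matrix

/-- If the graph of a smooth positive `u` is strictly locally convex
(`δᵢⱼ + uᵢuⱼ + u uᵢⱼ` positive definite) and `h = u √(1+|Du|²)` attains an interior
local maximum at `x₀ ∈ Ω`, then `Du(x₀) = 0`. -/
theorem stmt16 (n : ℕ) (Ω : Set (Fin n → ℝ)) (hΩ : IsOpen Ω)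
    (u : (Fin n → ℝ) → ℝ) (hu : ContDiffOn ℝ (⊤ : ℕ∞) u Ω) (hupos : ∀ x ∈ Ω, 0 < u x)
    (p : (Fin n → ℝ) → Fin n → ℝ)
    (hp : ∀ x i, p x i = fderiv ℝ u x (Pi.single i 1))
    (Hess : (Fin n → ℝ) → Matrix (Fin n) (Fin n) ℝ)
    (hHess : ∀ x i j, Hess x i j =
      fderiv ℝ (fun y => fderiv ℝ u y (Pi.single j 1)) x (Pi.single i 1))
    (M : (Fin n → ℝ) → Matrix (Fin n) (Fin n) ℝ)
    (hM : ∀ x i j, M x i j =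
      (if i = j then (1 : ℝ) else 0) + p x i * p x j + u x * Hess x i j)
    (hconv : ∀ x ∈ Ω, ∀ ξ : Fin n → ℝ, ξ ≠ 0 → 0 < ξ ⬝ᵥ (M x *ᵥ ξ))
    (x₀ : Fin n → ℝ) (hx₀ : x₀ ∈ Ω)
    (hmax : IsLocalMax (fun x => u x * Real.sqrt (1 + ∑ i, (p x i) ^ 2)) x₀) :
    ∀ i, p x₀ i = 0 := by
  -- smoothness at x₀
  have hcd : ContDiffAt ℝ (⊤ : ℕ∞) u x₀ := hu.contDiffAt (hΩ.mem_nhds hx₀)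
  have hcd' : ContDiffAt ℝ 1 (fderiv ℝ u) x₀ :=
    hcd.fderiv_right (WithTop.coe_le_coe.mpr le_top)
  have hud : DifferentiableAt ℝ u x₀ := hcd.differentiableAt (by simp)
  have hU : HasFDerivAt u (fderiv ℝ u x₀) x₀ := hud.hasFDerivAt
  -- derivative of each pₖ
  set D : Fin n → ((Fin n → ℝ) →L[ℝ] ℝ) :=
    fun k => fderiv ℝ (fun y => fderiv ℝ u y (Pi.single k 1)) x₀ with hD
  have hpdiff : ∀ k, DifferentiableAt ℝ (fun y => fderiv ℝ u y (Pi.single k 1)) x₀ := by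
    intro k
    exact (hcd'.differentiableAt one_ne_zero).clm_apply (differentiableAt_const _)
  have hPk : ∀ k, HasFDerivAt (fun x => p x k) (D k) x₀ := by
    intro k
    have : (fun x => p x k) = fun y => fderiv ℝ u y (Pi.single k 1) := by
      funext y; exact hp y k
    rw [this]
    exact (hpdiff k).hasFDerivAt
  have hDk : ∀ k i, D k (Pi.single i 1) = Hess x₀ i k := fun k i => (hHess x₀ i k).symm
  -- derivative of q = 1 + ∑ pₖ²
  set q : (Fin n → ℝ) → ℝ := fun x => 1 + ∑ k, (p x k) ^ 2 with hq
  set Q : (Fin n → ℝ) →L[ℝ] ℝ := ∑ k, (p x₀ k • D k + p x₀ k • D k) with hQ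
  have hQd : HasFDerivAt q Q x₀ := by
    have hsum : HasFDerivAt (fun x => ∑ k, (p x k) ^ 2) Q x₀ := by
      have : ∀ k ∈ Finset.univ, HasFDerivAt (fun x => (p x k) ^ 2)
          (p x₀ k • D k + p x₀ k • D k) x₀ := by
        intro k _
        have := (hPk k).fun_mul (hPk k)
        simpa [sq] using this
      simpa using HasFDerivAt.fun_sum this
    simpa [hq] using hsum.const_add 1
  -- q is positive
  have hs0 : (0:ℝ) ≤ ∑ k, (p x₀ k) ^ 2 := Finset.sum_nonneg fun k _ => sq_nonneg _
  have hqpos : 0 < q x₀ := by simp only [hq]; linarith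
  set w : ℝ := Real.sqrt (q x₀) with hw
  have hwpos : 0 < w := Real.sqrt_pos.2 hqpos
  have hw2 : w * w = q x₀ := Real.mul_self_sqrt hqpos.le
  -- derivative of f = u * sqrt q
  have hW : HasFDerivAt (fun x => Real.sqrt (q x)) ((1 / (2 * w)) • Q) x₀ :=
    hQd.sqrt hqpos.ne'
  have hF : HasFDerivAt (fun x => u x * Real.sqrt (1 + ∑ i, (p x i) ^ 2))
      (u x₀ • ((1 / (2 * w)) • Q) + Real.sqrt (q x₀) • (fderiv ℝ u x₀)) x₀ := by
    have := hU.fun_mul hW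
    simpa [hq] using this
  -- the derivative vanishes
  have hzero : (u x₀ • ((1 / (2 * w)) • Q) + Real.sqrt (q x₀) • (fderiv ℝ u x₀)) = 0 := by
    rw [← hF.fderiv]
    exact hmax.fderiv_eq_zero
  -- componentwise equation
  have key : ∀ i, u x₀ * (∑ k, p x₀ k * Hess x₀ i k) + (q x₀) * p x₀ i = 0 := by
    intro i
    have h1 : u x₀ * ((1 / (2 * w)) * Q (Pi.single i 1)) + w * p x₀ i = 0 := by
      have := congrArg (fun L : (Fin n → ℝ) →L[ℝ] ℝ => L (Pi.single i 1)) hzero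
      simpa [hp x₀ i, hw, smul_eq_mul] using this
    have hQi : Q (Pi.single i 1) = 2 * ∑ k, p x₀ k * Hess x₀ i k := by
      rw [hQ]
      simp only [ContinuousLinearMap.sum_apply, ContinuousLinearMap.add_apply,
        ContinuousLinearMap.smul_apply, hDk, smul_eq_mul]
      rw [Finset.mul_sum]
      congr 1; funext k; ring
    rw [hQi] at h1
    have h2 : u x₀ * ((1 / (2 * w)) * (2 * ∑ k, p x₀ k * Hess x₀ i k)) =
        u x₀ * (∑ k, p x₀ k * Hess x₀ i k) / w := by
      field_simp
    rw [h2] at h1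
    have := congrArg (fun t => t * w) h1
    simp only [add_mul, zero_mul, div_mul_cancel₀ _ hwpos.ne'] at this
    calc u x₀ * (∑ k, p x₀ k * Hess x₀ i k) + (q x₀) * p x₀ i
        = u x₀ * (∑ k, p x₀ k * Hess x₀ i k) + w * p x₀ i * w := by rw [← hw2]; ring
      _ = 0 := this
  -- M x₀ *ᵥ p x₀ = 0
  have hMv : M x₀ *ᵥ p x₀ = 0 := by
    funext i
    have expand : (M x₀ *ᵥ p x₀) i =
        p x₀ i + (∑ k, (p x₀ k)^2) * p x₀ i + u x₀ * (∑ k, p x₀ k * Hess x₀ i k) := by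
      simp only [mulVec, dotProduct, hM]
      rw [Finset.sum_congr rfl (fun j _ => by
        show ((if i = j then (1:ℝ) else 0) + p x₀ i * p x₀ j + u x₀ * Hess x₀ i j) * p x₀ j =
          (if i = j then p x₀ j else 0) + p x₀ i * (p x₀ j)^2 + u x₀ * (p x₀ j * Hess x₀ i j)
        split <;> ring)]
      rw [Finset.sum_add_distrib, Finset.sum_add_distrib, Finset.sum_ite_eq, ← Finset.mul_sum,
        ← Finset.mul_sum]
      simp; ring
    have := key i
    have hq0 : q x₀ = 1 + ∑ k, (p x₀ k)^2 := rfl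
    rw [hq0] at this
    have : (M x₀ *ᵥ p x₀) i = 0 := by rw [expand]; linarith
    simpa using this
  -- conclude p x₀ = 0
  by_contra hne
  push_neg at hne
  have hξ : p x₀ ≠ 0 := by
    obtain ⟨i, hi⟩ := hne
    intro h0
    exact hi (by rw [h0]; rfl)
  have := hconv x₀ hx₀ (p x₀) hξ
  rw [hMv] at this
  simp at this
end
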